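/- arXiv:2103.13068 — 3 statements merged into one kernel-verified Lean document; each statement's English description precedes it below -/
import Mathlib

section
/- Let ζ ∈ ℂ, let Λ = {σ₁,…,σₖ} ⊂ ℂ be pairwise distinct nodes and Ξ = {ξ₁,…,ξₖ} ⊂ ℂ poles disjoint from Λ ∪ {−ζ}, and let r(λ) = p(λ)/q(λ) with q(λ) = ∏ⱼ (λ−ξⱼ) be the unique rational function of type (k−1,k) interpolating f(λ) = 1/(ζ+λ) at Λ. Then for all λ ∉ Ξ ∪ {−ζ}: 1/(ζ+λ) − r(λ) = (1/(ζ+λ)) · (∏ⱼ (λ−σⱼ)/(λ−ξⱼ)) / (∏ⱼ (−ζ−σⱼ)/(−ζ−ξⱼ)). -/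
open Finset Polynomial Lagrange

/-! Clearing denominators, `q - (ζ + λ) p` is a polynomial of degree at most `k` vanishing at the
`k` nodes, hence a constant multiple `c · ∏ⱼ (λ - σⱼ)` of the nodal polynomial. At `λ = -ζ` the
term `(ζ + λ) p` drops out, so `c = q(-ζ) / ∏ⱼ (-ζ - σⱼ)`; dividing by `(ζ + λ) q(λ)` gives the
formula. -/

theorem mul_eq_of_div_eq_one_div {K : Type*} [Field K] {a b c : K} (hc : c ≠ 0)
    (h : a / b = 1 / c) : a * c = b := by
  have hb : b ≠ 0 := by
    rintro rfl
    rw [div_zero, one_div, eq_comm, inv_eq_zero] at h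
    exact hc h
  field_simp at h
  exact h

section

variable {ι R : Type*} [CommRing R] [IsDomain R] {s : Finset ι} {v : ι → R}

theorem eq_C_coeff_mul_nodal_of_eval_eq_zero (hvs : Set.InjOn v s) {r : R[X]}
    (hr : r.degree ≤ #s) (hrv : ∀ i ∈ s, r.eval (v i) = 0) :
    r = C (r.coeff #s) * nodal s v := by
  refine eq_of_degree_sub_lt_of_eval_index_eq s hvs ?_ fun i hi => by
    rw [hrv i hi, eval_mul, eval_nodal_at_node hi, mul_zero]
  have hnodal : (C (r.coeff #s) * nodal s v).degree ≤ #s :=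
    smul_eq_C_mul (R := R) _ ▸ (degree_smul_le _ _).trans degree_nodal.le
  rw [degree_lt_iff_coeff_zero]
  intro m hm
  rcases hm.lt_or_eq with hm | rfl
  · rw [coeff_sub, coeff_eq_zero_of_degree_lt (hr.trans_lt (by exact_mod_cast hm)),
      coeff_eq_zero_of_degree_lt (hnodal.trans_lt (by exact_mod_cast hm)), sub_zero]
  · rw [coeff_sub, coeff_C_mul, ← natDegree_nodal (s := s) (v := v), nodal_monic.coeff_natDegree,
      mul_one, sub_self]

theorem eval_sub_mul_mul_eval_nodal_eq (hvs : Set.InjOn v s) {z : R}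
    {p q : R[X]} (hp : p.degree < #s) (hq : q.degree ≤ #s)
    (hpq : ∀ i ∈ s, p.eval (v i) * (v i - z) = q.eval (v i)) (x : R) :
    (q.eval x - (x - z) * p.eval x) * (nodal s v).eval z = q.eval z * (nodal s v).eval x := by
  set r := q - (X - C z) * p
  have hr : r.degree ≤ #s := by
    refine (degree_sub_le _ _).trans (max_le hq ((degree_mul_le _ _).trans ?_))
    rw [degree_X_sub_C, add_comm]
    exact Nat.WithBot.add_one_le_of_lt hp
  have hrv : ∀ i ∈ s, r.eval (v i) = 0 := fun i hi => by
    simp [r, ← hpq i hi, mul_comm]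
  have h := eq_C_coeff_mul_nodal_of_eval_eq_zero hvs hr hrv
  have hev : ∀ y, r.eval y = r.coeff #s * (nodal s v).eval y := fun y => by
    conv_lhs => rw [h]
    rw [eval_mul, eval_C]
  have hx := hev x
  have hz := hev z
  simp only [r, eval_sub, eval_mul, eval_X, eval_C, sub_self, zero_mul, sub_zero] at hx hz
  linear_combination (nodal s v).eval z * hx - (nodal s v).eval x * hz

end

theorem hermiteWalsh_resolvent_general (k : ℕ) (ζ : ℂ)
    (σ ξ : Fin k → ℂ) (hσ : Function.Injective σ)
    (hσζ : ∀ j, σ j ≠ -ζ)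
    (p : Polynomial ℂ) (hp : p.degree < k)
    (hinterp : ∀ j, p.eval (σ j) / (∏ i, (σ j - ξ i)) = 1 / (ζ + σ j)) :
    ∀ l : ℂ, (∀ i, l ≠ ξ i) → l ≠ -ζ →
      1 / (ζ + l) - p.eval l / (∏ i, (l - ξ i)) =
        (1 / (ζ + l)) * ((∏ j, (l - σ j) / (l - ξ j)) /
          (∏ j, (-ζ - σ j) / (-ζ - ξ j))) := by
  intro l hlξ hlζ
  have hcross : ∀ j ∈ univ, p.eval (σ j) * (σ j - -ζ) = (nodal univ ξ).eval (σ j) := fun j _ => by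
    rw [eval_nodal, sub_neg_eq_add, add_comm]
    exact mul_eq_of_div_eq_one_div (fun h => hσζ j (by linear_combination h)) (hinterp j)
  have key := eval_sub_mul_mul_eval_nodal_eq hσ.injOn (by simpa using hp) (by simp) hcross l
  simp only [eval_nodal] at key
  have hQ : ∏ i, (l - ξ i) ≠ 0 := prod_ne_zero_iff.2 fun i _ => sub_ne_zero.2 (hlξ i)
  have hS0 : ∏ j, (-ζ - σ j) ≠ 0 := prod_ne_zero_iff.2 fun j _ => sub_ne_zero.2 (hσζ j).symm
  have hζl : ζ + l ≠ 0 := fun h => hlζ (by linear_combination h)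
  rw [prod_div_distrib, prod_div_distrib, div_div_eq_mul_div]
  field_simp
  linear_combination key

/-- Hermite-Walsh type identity for the resolvent kernel: if `r = p/q` with
`q(λ) = ∏ⱼ (λ - ξⱼ)` is the rational function of type `(k-1,k)` interpolating
`f(λ) = 1/(ζ+λ)` at the pairwise distinct nodes `σ₁,…,σₖ`, then for all
`λ ∉ Ξ ∪ {-ζ}`:
`1/(ζ+λ) - r(λ) = (1/(ζ+λ)) · (∏ⱼ (λ-σⱼ)/(λ-ξⱼ)) / (∏ⱼ (-ζ-σⱼ)/(-ζ-ξⱼ))`. -/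
theorem hermiteWalsh_resolvent (k : ℕ) (hk : 0 < k) (ζ : ℂ)
    (σ ξ : Fin k → ℂ) (hσ : Function.Injective σ)
    (hσζ : ∀ j, σ j ≠ -ζ) (hξσ : ∀ i j, ξ i ≠ σ j) (hξζ : ∀ i, ξ i ≠ -ζ)
    (p : Polynomial ℂ) (hp : p.degree < k)
    (hinterp : ∀ j, p.eval (σ j) / (∏ i, (σ j - ξ i)) = 1 / (ζ + σ j)) :
    ∀ l : ℂ, (∀ i, l ≠ ξ i) → l ≠ -ζ →
      1 / (ζ + l) - p.eval l / (∏ i, (l - ξ i)) =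
        (1 / (ζ + l)) * ((∏ j, (l - σ j) / (l - ξ j)) /
          (∏ j, (-ζ - σ j) / (-ζ - ξ j))) :=
  hermiteWalsh_resolvent_general k ζ σ ξ hσ hσζ p hp hinterp
end

section
/- Let ζ ∈ ℂ \ {0}, Λ = {σ₁,…,σₖ} ⊂ ℂ\{0} pairwise distinct, Λ̂ = Λ ∪ {0}, Ξ = {ξ₁,…,ξₖ} ⊂ ℂ disjoint from Λ̂ ∪ {−ζ}, and let r̂ be the unique rational function of type (k,k) with denominator ∏ⱼ(λ−ξⱼ) interpolating f(λ) = λ/(ζ+λ) at the k+1 points of Λ̂. Then λ/(ζ+λ) − r̂(λ) = (λ/(ζ+λ)) · r_{Λ,Ξ}(λ)/r_{Λ,Ξ}(−ζ), where r_{Λ,Ξ}(λ) = ∏ⱼ (λ−σⱼ)/(λ−ξⱼ). -/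
/-!
With `q = ∏ (X - ξⱼ)` and `s = ∏ (X - σⱼ)`, clearing denominators turns the claim into the
polynomial identity `X q - (ζ + X) p = c · X s` with `c = q(-ζ) / s(-ζ)`. The left side has
degree at most `k + 1` and vanishes at the `k + 1` nodes `0, σ₁, …, σₖ` of `Λ̂` by the
interpolation conditions, so it is a multiple of the nodal polynomial `X s`; the factor is read
off at the extra point `-ζ`, where `(ζ + X) p` vanishes.
-/

open Finset Polynomial Lagrange

namespace Lagrange

variable {F ι : Type*} [Field F]

theorem eq_C_mul_nodal_of_eval_eq_zero {s : Finset ι} {v : ι → F} (hvs : Set.InjOn v s)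
    {P : F[X]} (hP : P.natDegree ≤ #s) (hroots : ∀ i ∈ s, P.eval (v i) = 0) {x : F}
    (hx : (nodal s v).eval x ≠ 0) :
    P = C (P.eval x / (nodal s v).eval x) * nodal s v := by
  classical
  have hxs : x ∉ s.image v := by
    intro hx'
    obtain ⟨i, hi, rfl⟩ := mem_image.mp hx'
    exact hx (eval_nodal_at_node hi)
  refine eq_of_degree_sub_lt_of_eval_finset_eq (insert x (s.image v)) ?_ ?_
  · have hdeg : (P - C (P.eval x / (nodal s v).eval x) * nodal s v).natDegree ≤ #s :=
      (natDegree_sub_le _ _).trans (max_le hP ((natDegree_C_mul_le _ _).trans natDegree_nodal.le))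
    rw [card_insert_of_notMem hxs, card_image_of_injOn hvs]
    exact (degree_le_of_natDegree_le hdeg).trans_lt (by exact_mod_cast Nat.lt_succ_self _)
  · intro y hy
    rcases mem_insert.mp hy with rfl | hy
    · simp [div_mul_cancel₀ _ hx]
    · obtain ⟨i, hi, rfl⟩ := mem_image.mp hy
      simp [hroots i hi, eval_nodal_at_node hi]

theorem nodal_univ_cons {k : ℕ} (a : F) (σ : Fin k → F) :
    nodal univ (Fin.cons a σ : Fin (k + 1) → F) = (X - C a) * nodal univ σ := by
  simp [nodal, Fin.prod_univ_succ]

end Lagrange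

section Bernstein

variable {F : Type*} [Field F] {k : ℕ} {p : F[X]}

theorem natDegree_X_mul_nodal_sub_le (ζ : F) (ξ : Fin k → F) (hp : p.natDegree ≤ k) :
    (X * nodal univ ξ - (C ζ + X) * p).natDegree ≤ k + 1 := by
  have hζX : (C ζ + X).natDegree ≤ 1 := (natDegree_add_le _ _).trans (by simp)
  refine (natDegree_sub_le _ _).trans (max_le ?_ ?_)
  · exact natDegree_mul_le.trans (by simp [natDegree_nodal]; omega)
  · exact natDegree_mul_le.trans (by omega)

theorem X_mul_nodal_sub_eq {ζ : F} {σ ξ : Fin k → F} (hζ : ζ ≠ 0) (hσ : Function.Injective σ)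
    (hσ0 : ∀ j, σ j ≠ 0) (hsζ : (nodal univ σ).eval (-ζ) ≠ 0) (hp : p.natDegree ≤ k)
    (hp0 : p.eval 0 = 0)
    (hpσ : ∀ j, (ζ + σ j) * p.eval (σ j) = σ j * (nodal univ ξ).eval (σ j)) :
    X * nodal univ ξ - (C ζ + X) * p =
      C ((nodal univ ξ).eval (-ζ) / (nodal univ σ).eval (-ζ)) * (X * nodal univ σ) := by
  have hinj : Function.Injective (Fin.cons 0 σ : Fin (k + 1) → F) :=
    Fin.cons_injective_iff.mpr ⟨fun ⟨j, hj⟩ => hσ0 j hj, hσ⟩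
  have hP := eq_C_mul_nodal_of_eval_eq_zero hinj.injOn (s := univ)
    (P := X * nodal univ ξ - (C ζ + X) * p) (by simpa using natDegree_X_mul_nodal_sub_le ζ ξ hp)
    ?_ (x := -ζ) ?_
  · rw [hP, nodal_univ_cons, C_0, sub_zero]
    congr 2
    simp only [eval_sub, eval_mul, eval_X, eval_add, eval_C, add_neg_cancel, zero_mul, sub_zero]
    field_simp
  · rintro i -
    cases i using Fin.cases with
    | zero => simp [hp0]
    | succ j => simp [hpσ j]
  · simpa [nodal_univ_cons] using ⟨hζ, hsζ⟩

end Bernstein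

theorem hermiteWalsh_bernstein_general (k : ℕ) (ζ : ℂ) (hζ : ζ ≠ 0)
    (σ ξ : Fin k → ℂ) (hσ : Function.Injective σ) (hσ0 : ∀ j, σ j ≠ 0)
    (hξσ : ∀ i j, ξ i ≠ σ j) (hξ0 : ∀ i, ξ i ≠ 0)
    (hrζ : (∏ j, (-ζ - σ j) / (-ζ - ξ j)) ≠ 0)
    (p : Polynomial ℂ) (hp : p.degree ≤ k)
    (hinterp0 : p.eval 0 / (∏ i, ((0 : ℂ) - ξ i)) = 0)
    (hinterp : ∀ j, p.eval (σ j) / (∏ i, (σ j - ξ i)) = σ j / (ζ + σ j)) :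
    ∀ l : ℂ, (∀ i, l ≠ ξ i) → l ≠ -ζ →
      l / (ζ + l) - p.eval l / (∏ i, (l - ξ i)) =
        (l / (ζ + l)) * ((∏ j, (l - σ j) / (l - ξ j)) /
          (∏ j, (-ζ - σ j) / (-ζ - ξ j))) := by
  intro l hlξ hlζ
  simp only [prod_div_distrib] at hrζ ⊢
  obtain ⟨hsζ, hqζ⟩ := div_ne_zero_iff.mp hrζ
  have hζσ (j : Fin k) : ζ + σ j ≠ 0 := fun h =>
    prod_ne_zero_iff.mp hsζ j (mem_univ j) (by linear_combination -h)
  have hp0 : p.eval 0 = 0 := (div_eq_zero_iff.mp hinterp0).resolve_right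
    (prod_ne_zero_iff.mpr fun i _ => sub_ne_zero_of_ne (hξ0 i).symm)
  have hpσ (j : Fin k) : (ζ + σ j) * p.eval (σ j) = σ j * (nodal univ ξ).eval (σ j) := by
    have hqσ : ∏ i, (σ j - ξ i) ≠ 0 :=
      prod_ne_zero_iff.mpr fun i _ => sub_ne_zero_of_ne (hξσ i j).symm
    rw [eval_nodal]
    linear_combination (div_eq_div_iff hqσ (hζσ j)).mp (hinterp j)
  have h := congrArg (eval l) (X_mul_nodal_sub_eq hζ hσ hσ0 (by rwa [eval_nodal])
    (natDegree_le_iff_degree_le.mpr hp) hp0 hpσ)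
  simp only [eval_sub, eval_mul, eval_X, eval_add, eval_C, eval_nodal] at h
  rw [div_mul_eq_mul_div, eq_div_iff hsζ] at h
  have hql : ∏ i, (l - ξ i) ≠ 0 := prod_ne_zero_iff.mpr fun i _ => sub_ne_zero_of_ne (hlξ i)
  have hζl : ζ + l ≠ 0 := fun h => hlζ (by linear_combination h)
  field_simp
  linear_combination h

/-- Hermite-Walsh type identity for the complete Bernstein kernel: let `ζ ≠ 0`,
`Λ = {σ₁,…,σₖ} ⊂ ℂ \ {0}` pairwise distinct, `Λ̂ = Λ ∪ {0}`, and let `r̂ = p/q` with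
`q(λ) = ∏ⱼ (λ-ξⱼ)` be the rational function of type `(k,k)` interpolating
`f(λ) = λ/(ζ+λ)` at the `k+1` points of `Λ̂`. Then
`λ/(ζ+λ) - r̂(λ) = (λ/(ζ+λ)) · r_{Λ,Ξ}(λ)/r_{Λ,Ξ}(-ζ)` with
`r_{Λ,Ξ}(λ) = ∏ⱼ (λ-σⱼ)/(λ-ξⱼ)`. -/
theorem hermiteWalsh_bernstein (k : ℕ) (hk : 0 < k) (ζ : ℂ) (hζ : ζ ≠ 0)
    (σ ξ : Fin k → ℂ) (hσ : Function.Injective σ) (hσ0 : ∀ j, σ j ≠ 0)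
    (hσζ : ∀ j, σ j ≠ -ζ) (hξσ : ∀ i j, ξ i ≠ σ j) (hξ0 : ∀ i, ξ i ≠ 0)
    (hξζ : ∀ i, ξ i ≠ -ζ)
    (hrζ : (∏ j, (-ζ - σ j) / (-ζ - ξ j)) ≠ 0)
    (p : Polynomial ℂ) (hp : p.degree ≤ k)
    (hinterp0 : p.eval 0 / (∏ i, ((0 : ℂ) - ξ i)) = 0)
    (hinterp : ∀ j, p.eval (σ j) / (∏ i, (σ j - ξ i)) = σ j / (ζ + σ j)) :
    ∀ l : ℂ, (∀ i, l ≠ ξ i) → l ≠ -ζ →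
      l / (ζ + l) - p.eval l / (∏ i, (l - ξ i)) =
        (l / (ζ + l)) * ((∏ j, (l - σ j) / (l - ξ j)) /
          (∏ j, (-ζ - σ j) / (-ζ - ξ j))) :=
  hermiteWalsh_bernstein_general k ζ hζ σ ξ hσ hσ0 hξσ hξ0 hrζ p hp hinterp0 hinterp
end

section
/- Let α ∈ (0,1], s ∈ (0,1], t > 0, λ_min > 0, and c_α > 0. If g : iℝ → ℝ satisfies |g(ζ)| ≤ c_α/(1 + t^α |ζ|^s) for all ζ ∈ iℝ, then ∫_{iℝ} |g(ζ)/(ζ+λ_min)| |dζ| ≤ 2c_α (λ_min^{-1} + s^{-1} ln(1 + t^{-α})). -/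
open MeasureTheory Real Set Filter Topology

/-! On the imaginary axis `|iy + λ| ≥ max(|y|, λ)`, so the integrand is dominated by the even
function equal to `c/λ` for `|y| ≤ 1` and to `c/(|y|(1 + tᵅ|y|ˢ))` for `|y| > 1`. On `(1, ∞)` the
latter has the antiderivative `-s⁻¹ log(1 + t^{-α} r^{-s})`, which gives `s⁻¹ log(1 + t^{-α})`. -/

theorem integrable_comp_abs_of_integrableOn_Ioi {f : ℝ → ℝ} (hf : IntegrableOn f (Ioi 0)) :
    Integrable (fun x => f |x|) := by
  have h_pos : IntegrableOn (fun x => f |x|) (Ioi 0) :=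
    hf.congr_fun (fun x hx => by rw [abs_of_pos hx]) measurableSet_Ioi
  have h_neg : IntegrableOn (fun x => f |x|) (Iic 0) := by
    have h_emb : MeasurableEmbedding fun x : ℝ => -x := (Homeomorph.neg ℝ).measurableEmbedding
    rw [← Measure.map_neg_eq_self (volume : Measure ℝ), h_emb.integrableOn_map_iff]
    simp_rw [Function.comp_def, abs_neg, neg_preimage, neg_Iic, neg_zero]
    exact (integrableOn_Ici_iff_integrableOn_Ioi).mpr h_pos
  rw [← integrableOn_univ, ← Iic_union_Ioi (a := (0 : ℝ))]
  exact h_neg.union h_pos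

section Tail

variable {a s : ℝ}

theorem hasDerivAt_neg_inv_mul_log_one_add_rpow_neg (ha : 0 < a) (hs : 0 < s) {r : ℝ}
    (hr : 0 < r) :
    HasDerivAt (fun r => -s⁻¹ * log (1 + a⁻¹ * r ^ (-s))) (r * (1 + a * r ^ s))⁻¹ r := by
  have h_inner : HasDerivAt (fun r => 1 + a⁻¹ * r ^ (-s)) (a⁻¹ * (-s * r ^ (-s - 1))) r :=
    ((hasDerivAt_rpow_const (Or.inl hr.ne')).const_mul _).const_add 1
  refine ((h_inner.log (by positivity)).const_mul (-s⁻¹)).congr_deriv ?_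
  have : 0 < r ^ s := rpow_pos_of_pos hr s
  rw [rpow_neg hr.le, show -s - 1 = -(s + 1) by ring, rpow_neg hr.le, rpow_add hr, rpow_one]
  field_simp
  ring

theorem tendsto_neg_inv_mul_log_one_add_rpow_neg (hs : 0 < s) :
    Tendsto (fun r => -s⁻¹ * log (1 + a⁻¹ * r ^ (-s))) atTop (𝓝 0) := by
  have h := ((((tendsto_rpow_neg_atTop hs).const_mul a⁻¹).const_add 1).log
    (by norm_num)).const_mul (-s⁻¹)
  simpa using h

theorem integrableOn_Ioi_one_inv_mul_one_add_rpow (ha : 0 < a) (hs : 0 < s) :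
    IntegrableOn (fun r => (r * (1 + a * r ^ s))⁻¹) (Ioi 1) :=
  integrableOn_Ioi_deriv_of_nonneg'
    (fun r hr => hasDerivAt_neg_inv_mul_log_one_add_rpow_neg ha hs (one_pos.trans_le hr))
    (fun r hr => by have : (0 : ℝ) < r := one_pos.trans hr; positivity)
    (tendsto_neg_inv_mul_log_one_add_rpow_neg hs)

theorem integral_Ioi_one_inv_mul_one_add_rpow (ha : 0 < a) (hs : 0 < s) :
    ∫ r in Ioi 1, (r * (1 + a * r ^ s))⁻¹ = s⁻¹ * log (1 + a⁻¹) := by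
  rw [integral_Ioi_of_hasDerivAt_of_nonneg'
    (fun r hr => hasDerivAt_neg_inv_mul_log_one_add_rpow_neg ha hs (one_pos.trans_le hr))
    (fun r hr => by have : (0 : ℝ) < r := one_pos.trans hr; positivity)
    (tendsto_neg_inv_mul_log_one_add_rpow_neg hs)]
  simp

end Tail

theorem max_abs_le_norm_mul_I_add (y l : ℝ) : max |y| |l| ≤ ‖(y : ℂ) * Complex.I + l‖ := by
  refine max_le ?_ ?_
  · simpa using Complex.abs_im_le_norm ((y : ℂ) * Complex.I + l)
  · simpa using Complex.abs_re_le_norm ((y : ℂ) * Complex.I + l)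

noncomputable def imagAxisMajorant (c l a s r : ℝ) : ℝ :=
  if r ≤ 1 then c / l else c * (r * (1 + a * r ^ s))⁻¹

section Majorant

variable {c l a s : ℝ}

theorem norm_div_mul_I_add_le_imagAxisMajorant (hc : 0 ≤ c) (hl : 0 < l) (ha : 0 ≤ a)
    {y : ℝ} {w : ℂ} (hw : ‖w‖ ≤ c / (1 + a * |y| ^ s)) :
    ‖w / ((y : ℂ) * Complex.I + l)‖ ≤ imagAxisMajorant c l a s |y| := by
  have h_den := max_abs_le_norm_mul_I_add y l
  rw [abs_of_pos hl] at h_den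
  have h_one : 1 ≤ 1 + a * |y| ^ s := by
    have := rpow_nonneg (abs_nonneg y) s
    nlinarith
  rw [norm_div, imagAxisMajorant]
  split_ifs with hy
  · exact div_le_div₀ hc (hw.trans (div_le_self hc h_one)) hl (le_of_max_le_right h_den)
  · calc ‖w‖ / ‖(y : ℂ) * Complex.I + l‖ ≤ c / (1 + a * |y| ^ s) / |y| :=
          div_le_div₀ (by positivity) hw (by linarith) (le_of_max_le_left h_den)
      _ = c * (|y| * (1 + a * |y| ^ s))⁻¹ := by field_simp

theorem integrableOn_imagAxisMajorant_Ioi_zero (ha : 0 < a) (hs : 0 < s) :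
    IntegrableOn (imagAxisMajorant c l a s) (Ioi 0) := by
  rw [← Ioc_union_Ioi_eq_Ioi zero_le_one]
  refine IntegrableOn.union ?_ ?_
  · exact (integrableOn_const measure_Ioc_lt_top.ne).congr_fun
      (fun r hr => (if_pos hr.2).symm) measurableSet_Ioc
  · exact IntegrableOn.congr_fun ((integrableOn_Ioi_one_inv_mul_one_add_rpow ha hs).const_mul c)
      (fun r hr => (if_neg (not_le.mpr hr)).symm) measurableSet_Ioi

theorem integral_imagAxisMajorant_Ioi_zero (ha : 0 < a) (hs : 0 < s) :
    ∫ r in Ioi 0, imagAxisMajorant c l a s r = c * (l⁻¹ + s⁻¹ * log (1 + a⁻¹)) := by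
  have h_int := integrableOn_imagAxisMajorant_Ioi_zero (c := c) (l := l) ha hs
  rw [← Ioc_union_Ioi_eq_Ioi zero_le_one] at h_int ⊢
  rw [setIntegral_union Ioc_disjoint_Ioi_same measurableSet_Ioi
      (h_int.mono_set subset_union_left) (h_int.mono_set subset_union_right),
    setIntegral_congr_fun (f := imagAxisMajorant c l a s) (g := fun _ => c / l)
      measurableSet_Ioc (fun r hr => if_pos hr.2),
    setIntegral_congr_fun (f := imagAxisMajorant c l a s)
      (g := fun r => c * (r * (1 + a * r ^ s))⁻¹) measurableSet_Ioi
      (fun r hr => if_neg (not_le.mpr hr)),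
    setIntegral_const, volume_real_Ioc_of_le zero_le_one, integral_const_mul,
    integral_Ioi_one_inv_mul_one_add_rpow ha hs, sub_zero, one_smul]
  ring

end Majorant

theorem imaginary_axis_integral_bound_general (α s t lmin cα : ℝ)
    (hs0 : 0 < s)
    (ht : 0 < t) (hlmin : 0 < lmin) (hcα : 0 < cα)
    (g : ℝ → ℂ)
    (hg : ∀ y : ℝ, ‖g y‖ ≤ cα / (1 + t ^ α * |y| ^ s)) :
    (∫ y : ℝ, ‖g y / ((y : ℂ) * Complex.I + (lmin : ℂ))‖) ≤
      2 * cα * (lmin⁻¹ + s⁻¹ * Real.log (1 + t ^ (-α))) := by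
  have ha : 0 < t ^ α := rpow_pos_of_pos ht α
  calc (∫ y : ℝ, ‖g y / ((y : ℂ) * Complex.I + (lmin : ℂ))‖)
      ≤ ∫ y, imagAxisMajorant cα lmin (t ^ α) s |y| :=
        integral_mono_of_nonneg (ae_of_all _ fun _ => norm_nonneg _)
          (integrable_comp_abs_of_integrableOn_Ioi
            (integrableOn_imagAxisMajorant_Ioi_zero ha hs0))
          (ae_of_all _ fun y =>
            norm_div_mul_I_add_le_imagAxisMajorant hcα.le hlmin ha.le (hg y))
    _ = 2 * cα * (lmin⁻¹ + s⁻¹ * Real.log (1 + t ^ (-α))) := by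
        rw [integral_comp_abs, integral_imagAxisMajorant_Ioi_zero ha hs0, rpow_neg ht.le]
        ring

/-- If `g` on the imaginary axis satisfies `|g(iy)| ≤ c_α/(1 + t^α |y|^s)`, then
`∫_{iℝ} |g(ζ)/(ζ+λ_min)| |dζ| ≤ 2 c_α (λ_min⁻¹ + s⁻¹ ln(1+t^{-α}))`. -/
theorem imaginary_axis_integral_bound (α s t lmin cα : ℝ)
    (hα0 : 0 < α) (hα1 : α ≤ 1) (hs0 : 0 < s) (hs1 : s ≤ 1)
    (ht : 0 < t) (hlmin : 0 < lmin) (hcα : 0 < cα)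
    (g : ℝ → ℂ)
    (hg : ∀ y : ℝ, ‖g y‖ ≤ cα / (1 + t ^ α * |y| ^ s)) :
    (∫ y : ℝ, ‖g y / ((y : ℂ) * Complex.I + (lmin : ℂ))‖) ≤
      2 * cα * (lmin⁻¹ + s⁻¹ * Real.log (1 + t ^ (-α))) :=
  imaginary_axis_integral_bound_general α s t lmin cα hs0 ht hlmin hcα g hg
end
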